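/- arXiv:2604.20575 — 3 statements merged into one kernel-verified Lean document; each statement's English description precedes it below -/
import Mathlib

section
/- There is no function s : ℕ → ℕ such that s(n) ≤ n²/(2e) for all sufficiently large n and n^n ≤ (s(n) + n + 1)·(n+1)·(e·s(n)/n)^n for all sufficiently large n. -/
open Filter

/-- There is no `s : ℕ → ℕ` with `s n ≤ n²/(2e)` for all large `n` and
`n^n ≤ (s n + n + 1)(n+1)(e·s n/n)^n` for all large `n`. -/
theorem no_small_s :
    ¬ ∃ s : ℕ → ℕ,
      (∀ᶠ n : ℕ in atTop, (s n : ℝ) ≤ (n : ℝ) ^ 2 / (2 * Real.exp 1)) ∧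
      (∀ᶠ n : ℕ in atTop, (n : ℝ) ^ n ≤
        ((s n : ℝ) + n + 1) * (n + 1) * (Real.exp 1 * (s n : ℝ) / n) ^ n) := by
  rintro ⟨s, h1, h2⟩
  have hlo := (isLittleO_pow_const_const_pow_of_one_lt (R := ℝ) 4
    (by norm_num : (1:ℝ) < 2)).bound (by norm_num : (0:ℝ) < 1/2)
  obtain ⟨n, ⟨hs, hmain⟩, hlittle, hn6⟩ :=
    (((h1.and h2).and (hlo.and (eventually_ge_atTop 6)))).exists
  have hN : (6:ℝ) ≤ (n:ℝ) := by exact_mod_cast hn6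
  have hNpos : (0:ℝ) < (n:ℝ) := by linarith
  have hepos : (0:ℝ) < Real.exp 1 := Real.exp_pos 1
  have hE : (1:ℝ) ≤ Real.exp 1 := Real.one_le_exp (by norm_num)
  have hs0 : (0:ℝ) ≤ (s n : ℝ) := by positivity
  -- e * s / n ≤ n / 2
  have h1' : Real.exp 1 * (s n : ℝ) ≤ (n:ℝ)^2 / 2 := by
    have h := mul_le_mul_of_nonneg_left hs hepos.le
    have heq : Real.exp 1 * ((n:ℝ)^2 / (2 * Real.exp 1)) = (n:ℝ)^2 / 2 := by
      field_simp
    linarith [heq ▸ h]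
  have hq : Real.exp 1 * (s n : ℝ) / (n:ℝ) ≤ (n:ℝ)/2 := by
    rw [div_le_div_iff₀ hNpos (by norm_num : (0:ℝ) < 2)]
    nlinarith
  have hq0 : (0:ℝ) ≤ Real.exp 1 * (s n : ℝ) / (n:ℝ) := by positivity
  have hpow : (Real.exp 1 * (s n : ℝ) / (n:ℝ))^n ≤ ((n:ℝ)/2)^n :=
    pow_le_pow_left₀ hq0 hq n
  -- s ≤ n²
  have hsn : (s n : ℝ) ≤ (n:ℝ)^2 := by
    have : (n:ℝ)^2 / (2 * Real.exp 1) ≤ (n:ℝ)^2 :=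
      div_le_self (by positivity) (by nlinarith)
    linarith
  set P : ℝ := ((n:ℝ)^2 + n + 1) * (n + 1) with hP
  have hPpos : 0 < P := by positivity
  have h3 : (n:ℝ)^n ≤ P * ((n:ℝ)/2)^n := by
    calc (n:ℝ)^n ≤ ((s n : ℝ) + n + 1) * (n + 1) *
          (Real.exp 1 * (s n : ℝ) / n) ^ n := hmain
      _ ≤ ((s n : ℝ) + n + 1) * (n + 1) * ((n:ℝ)/2)^n := by
          apply mul_le_mul_of_nonneg_left hpow (by positivity)
      _ ≤ P * ((n:ℝ)/2)^n := by
          apply mul_le_mul_of_nonneg_right _ (by positivity)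
          nlinarith
  have h2p : (0:ℝ) < 2^n := by positivity
  have hnp : (0:ℝ) < (n:ℝ)^n := by positivity
  have key : (2:ℝ)^n ≤ P := by
    rw [div_pow] at h3
    have h4 : (n:ℝ)^n * 2^n ≤ P * (n:ℝ)^n := by
      have := mul_le_mul_of_nonneg_right h3 h2p.le
      calc (n:ℝ)^n * 2^n ≤ P * ((n:ℝ)^n / 2^n) * 2^n := this
        _ = P * (n:ℝ)^n := by field_simp
    have h5 : (2:ℝ)^n * (n:ℝ)^n ≤ P * (n:ℝ)^n := by linarith [h4, mul_comm ((n:ℝ)^n) ((2:ℝ)^n)]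
    exact le_of_mul_le_mul_right h5 hnp
  -- P ≤ n^4
  have hPle : P ≤ (n:ℝ)^4 := by
    rw [hP]; nlinarith [sq_nonneg ((n:ℝ) - 2), sq_nonneg ((n:ℝ)^2 - 2*(n:ℝ))]
  -- from littleO: n^4 ≤ (1/2) * 2^n
  have hlit : (n:ℝ)^4 ≤ (1/2) * 2^n := by
    have := hlittle
    simp only [Real.norm_eq_abs] at this
    rwa [abs_of_nonneg (by positivity), abs_of_nonneg (by positivity)] at this
  linarith
end

section
/- Suppose s(n) ≥ 2n for all n and n^n ≤ (s(n)+n+1) · ∑_{r=0}^{n} s(n)^r / r! for all n. Then s(n) = Ω(n²), i.e., there exists a constant c > 0 such that s(n) ≥ c·n² for all sufficiently large n. -/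
open Filter Finset

lemma aux_term_mono (a : ℝ) (h0 : 0 ≤ a) :
    ∀ n : ℕ, (n : ℝ) ≤ a → ∀ r ≤ n, a ^ r / (Nat.factorial r) ≤ a ^ n / (Nat.factorial n) := by
  intro n
  induction n with
  | zero => intro _ r hr; interval_cases r; exact le_refl _
  | succ m ih =>
    intro ha r hr
    rcases eq_or_lt_of_le hr with h | h
    · subst h; exact le_refl _
    · have hrm : r ≤ m := Nat.lt_succ_iff.mp h
      have hma : (m : ℝ) ≤ a := by push_cast at ha; linarith
      refine (ih hma r hrm).trans ?_
      have hfm : (0 : ℝ) < (Nat.factorial m : ℝ) := by positivity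
      have hfm1 : (0 : ℝ) < (Nat.factorial (m + 1) : ℝ) := by positivity
      rw [div_le_div_iff₀ hfm hfm1]
      have hfac : (Nat.factorial (m + 1) : ℝ) = ((m : ℝ) + 1) * Nat.factorial m := by
        rw [Nat.factorial_succ]; push_cast; ring
      rw [hfac, pow_succ]
      have hpow : (0 : ℝ) ≤ a ^ m := by positivity
      have ha1 : ((m : ℝ) + 1) ≤ a := by push_cast at ha; linarith
      nlinarith [mul_le_mul_of_nonneg_left ha1 (mul_nonneg hpow hfm.le)]

lemma aux_pow4 : ∀ n : ℕ, 17 ≤ n → n ^ 4 < 2 ^ n := by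
  intro n hn
  induction n with
  | zero => omega
  | succ m ih =>
    rcases Nat.lt_or_ge m 17 with h | h
    · have : m = 16 := by omega
      subst this; decide
    · have h1 := ih h
      have hA : 17 * m ^ 3 ≤ m ^ 4 := by
        calc 17 * m ^ 3 ≤ m * m ^ 3 := Nat.mul_le_mul_right _ h
          _ = m ^ 4 := by ring
      have hB : 17 * m ^ 2 ≤ m ^ 3 := by
        calc 17 * m ^ 2 ≤ m * m ^ 2 := Nat.mul_le_mul_right _ h
          _ = m ^ 3 := by ring
      have hC : 17 * m ≤ m ^ 2 := by
        calc 17 * m ≤ m * m := Nat.mul_le_mul_right _ h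
          _ = m ^ 2 := by ring
      have h2 : (m + 1) ^ 4 ≤ 2 * m ^ 4 := by nlinarith
      calc (m + 1) ^ 4 ≤ 2 * m ^ 4 := h2
        _ < 2 * 2 ^ m := by omega
        _ = 2 ^ (m + 1) := by ring

/-- If `s n ≥ 2n` for all `n` and the master inequality
`n^n ≤ (s n + n + 1) · ∑_{r=0}^{n} (s n)^r / r!` holds for all `n`, then `s n = Ω(n²)`. -/
theorem s_quadratic_lower_bound (s : ℕ → ℕ)
    (hs : ∀ n, 2 * n ≤ s n)
    (hmaster : ∀ n : ℕ, (n : ℝ) ^ n ≤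
      ((s n : ℝ) + n + 1) * ∑ r ∈ Finset.range (n + 1), (s n : ℝ) ^ r / (Nat.factorial r)) :
    ∃ c : ℝ, 0 < c ∧ ∀ᶠ n : ℕ in atTop, c * (n : ℝ) ^ 2 ≤ s n := by
  refine ⟨(2 * Real.exp 1)⁻¹, by positivity, ?_⟩
  filter_upwards [eventually_ge_atTop 17] with n hn
  by_contra hcon
  push_neg at hcon
  have hE : (1 : ℝ) ≤ Real.exp 1 := by
    have := Real.add_one_le_exp (1 : ℝ); linarith
  have hE0 : (0 : ℝ) < Real.exp 1 := Real.exp_pos 1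
  have hN17 : (17 : ℝ) ≤ (n : ℝ) := by exact_mod_cast hn
  have hN0 : (0 : ℝ) < (n : ℝ) := by linarith
  have hS2n : 2 * (n : ℝ) ≤ (s n : ℝ) := by exact_mod_cast hs n
  have hS0 : (0 : ℝ) < (s n : ℝ) := by linarith
  -- from hcon : s n < (2 exp 1)⁻¹ * n^2
  have hSE : (s n : ℝ) * Real.exp 1 < (n : ℝ) ^ 2 / 2 := by
    rw [inv_mul_eq_div, lt_div_iff₀ (by positivity)] at hcon
    nlinarith
  have hSN2 : (s n : ℝ) ≤ (n : ℝ) ^ 2 := by nlinarith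
  -- sum bound
  have hsum : ∑ r ∈ Finset.range (n + 1), (s n : ℝ) ^ r / (Nat.factorial r)
      ≤ ((n : ℝ) + 1) * ((s n : ℝ) ^ n / Nat.factorial n) := by
    have hNa : (n : ℝ) ≤ (s n : ℝ) := by linarith
    have hmono := aux_term_mono (s n : ℝ) hS0.le n hNa
    calc ∑ r ∈ Finset.range (n + 1), (s n : ℝ) ^ r / (Nat.factorial r)
        ≤ ∑ _r ∈ Finset.range (n + 1), (s n : ℝ) ^ n / (Nat.factorial n) :=
          Finset.sum_le_sum fun r hr => hmono r (Nat.lt_succ_iff.mp (Finset.mem_range.mp hr))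
      _ = ((n : ℝ) + 1) * ((s n : ℝ) ^ n / Nat.factorial n) := by
          rw [Finset.sum_const, Finset.card_range]; push_cast; ring
  -- master inequality refined
  have h1 : (n : ℝ) ^ n ≤ ((s n : ℝ) + n + 1) * ((n : ℝ) + 1) * ((s n : ℝ) ^ n / Nat.factorial n) := by
    refine (hmaster n).trans ?_
    rw [mul_assoc]
    exact mul_le_mul_of_nonneg_left hsum (by positivity)
  -- Stirling-type bound : n^n ≤ e^n * n!
  have h2 : (n : ℝ) ^ n ≤ Real.exp 1 ^ n * Nat.factorial n := by
    have := Real.pow_div_factorial_le_exp (x := (n : ℝ)) hN0.le n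
    rw [div_le_iff₀ (by positivity)] at this
    calc (n : ℝ) ^ n ≤ Real.exp (n : ℝ) * Nat.factorial n := this
      _ = Real.exp 1 ^ n * Nat.factorial n := by
        rw [← Real.exp_nat_mul, mul_one]
  have hfn : (0 : ℝ) < (Nat.factorial n : ℝ) := by positivity
  have hkey : (n : ℝ) ^ n * (n : ℝ) ^ n ≤
      ((s n : ℝ) + n + 1) * ((n : ℝ) + 1) * ((s n : ℝ) ^ n * Real.exp 1 ^ n) := by
    have hmm := mul_le_mul h1 h2 (by positivity) (by positivity)
    calc (n : ℝ) ^ n * (n : ℝ) ^ n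
        ≤ ((s n : ℝ) + n + 1) * ((n : ℝ) + 1) * ((s n : ℝ) ^ n / Nat.factorial n) *
          (Real.exp 1 ^ n * Nat.factorial n) := hmm
      _ = ((s n : ℝ) + n + 1) * ((n : ℝ) + 1) * ((s n : ℝ) ^ n * Real.exp 1 ^ n) := by
          field_simp
  have hP : ((s n : ℝ) + n + 1) * ((n : ℝ) + 1) ≤ (n : ℝ) ^ 4 := by nlinarith
  have hSEpow : (s n : ℝ) ^ n * Real.exp 1 ^ n < ((n : ℝ) ^ 2 / 2) ^ n := by
    rw [← mul_pow]
    exact pow_lt_pow_left₀ hSE (by positivity) (by omega)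
  have hfinal : (n : ℝ) ^ n * (n : ℝ) ^ n < (n : ℝ) ^ 4 * (((n : ℝ) ^ 2) ^ n / 2 ^ n) := by
    calc (n : ℝ) ^ n * (n : ℝ) ^ n
        ≤ ((s n : ℝ) + n + 1) * ((n : ℝ) + 1) * ((s n : ℝ) ^ n * Real.exp 1 ^ n) := hkey
      _ < ((s n : ℝ) + n + 1) * ((n : ℝ) + 1) * (((n : ℝ) ^ 2 / 2) ^ n) :=
          mul_lt_mul_of_pos_left hSEpow (by positivity)
      _ ≤ (n : ℝ) ^ 4 * (((n : ℝ) ^ 2 / 2) ^ n) :=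
          mul_le_mul_of_nonneg_right hP (by positivity)
      _ = (n : ℝ) ^ 4 * (((n : ℝ) ^ 2) ^ n / 2 ^ n) := by rw [div_pow]
  -- rearrange to 2^n < n^4
  have hpos : (0 : ℝ) < ((n : ℝ) ^ 2) ^ n := by positivity
  have h2pos : (0 : ℝ) < (2 : ℝ) ^ n := by positivity
  have hrw : (n : ℝ) ^ n * (n : ℝ) ^ n = ((n : ℝ) ^ 2) ^ n := by
    rw [← pow_mul, ← pow_add]; ring_nf
  rw [hrw] at hfinal
  have hmul : ((n : ℝ) ^ 2) ^ n * 2 ^ n < (n : ℝ) ^ 4 * ((n : ℝ) ^ 2) ^ n := by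
    have h := mul_lt_mul_of_pos_right hfinal h2pos
    calc ((n : ℝ) ^ 2) ^ n * 2 ^ n
        < (n : ℝ) ^ 4 * (((n : ℝ) ^ 2) ^ n / 2 ^ n) * 2 ^ n := h
      _ = (n : ℝ) ^ 4 * ((n : ℝ) ^ 2) ^ n := by field_simp
  have h2n : (2 : ℝ) ^ n < (n : ℝ) ^ 4 := by
    have : ((n : ℝ) ^ 2) ^ n * 2 ^ n < ((n : ℝ) ^ 2) ^ n * (n : ℝ) ^ 4 := by linarith [hmul, mul_comm ((n : ℝ) ^ 4) (((n : ℝ) ^ 2) ^ n)]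
    exact lt_of_mul_lt_mul_left this hpos.le
  have hcontra : ((n : ℕ) : ℝ) ^ 4 < (2 : ℝ) ^ n := by exact_mod_cast aux_pow4 n hn
  linarith
end

section
/- Let f and g be polynomials in a free algebra F⟨X ∪ Y⟩ on disjoint variable sets X and Y. Decompose a polynomial h as h = h_1 + h_X + h_Y + h_{XY} + h_other where h_1 is the constant term, h_X the non-constant X-only part, h_Y the non-constant Y-only part, h_{XY} the part with all X-variables before all Y-variables containing both, and h_other the rest. Then (fg)_{XY} = f_X·g_Y + f_{XY}·g_Y + f_X·g_{XY} + f_{XY}·g_1 + f_1·g_{XY}. -/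
open scoped Classical

noncomputable section

variable {F X Y : Type*} [Field F]

/-- A word over `X ⊕ Y` is of type `XY` if it contains at least one `X`-variable and at
least one `Y`-variable, and every `X`-variable occurs before every `Y`-variable. -/
def isXYWord (w : FreeMonoid (X ⊕ Y)) : Prop :=
  ∃ u v : List (X ⊕ Y), FreeMonoid.toList w = u ++ v ∧
    (∀ c ∈ u, c.isLeft) ∧ (∀ c ∈ v, c.isRight) ∧ u ≠ [] ∧ v ≠ []

/-- The constant part `h_1` of a polynomial in `F⟨X ∪ Y⟩`. -/
def part1 (h : MonoidAlgebra F (FreeMonoid (X ⊕ Y))) : MonoidAlgebra F (FreeMonoid (X ⊕ Y)) :=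
  MonoidAlgebra.ofCoeff (Finsupp.filter (fun w => w = 1) h.coeff)

/-- The non-constant `X`-only part `h_X`. -/
def partX (h : MonoidAlgebra F (FreeMonoid (X ⊕ Y))) : MonoidAlgebra F (FreeMonoid (X ⊕ Y)) :=
  MonoidAlgebra.ofCoeff (@Finsupp.filter (FreeMonoid (X ⊕ Y)) F _
    (fun w => w ≠ 1 ∧ ∀ c ∈ FreeMonoid.toList w, c.isLeft = true) (Classical.decPred _) h.coeff)

/-- The non-constant `Y`-only part `h_Y`. -/
def partY (h : MonoidAlgebra F (FreeMonoid (X ⊕ Y))) : MonoidAlgebra F (FreeMonoid (X ⊕ Y)) :=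
  MonoidAlgebra.ofCoeff (@Finsupp.filter (FreeMonoid (X ⊕ Y)) F _
    (fun w => w ≠ 1 ∧ ∀ c ∈ FreeMonoid.toList w, c.isRight = true) (Classical.decPred _) h.coeff)

/-- The `XY`-part `h_{XY}`. -/
def partXY (h : MonoidAlgebra F (FreeMonoid (X ⊕ Y))) : MonoidAlgebra F (FreeMonoid (X ⊕ Y)) :=
  MonoidAlgebra.ofCoeff (Finsupp.filter (fun w => isXYWord w) h.coeff)

section ListAux

variable {X Y : Type*}

/-- All-left predicate on lists. -/
def isLl (l : List (X ⊕ Y)) : Prop := ∀ c ∈ l, c.isLeft = true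

/-- All-right predicate on lists. -/
def isRl (l : List (X ⊕ Y)) : Prop := ∀ c ∈ l, c.isRight = true

/-- XY-word predicate on lists. -/
def isXYl (l : List (X ⊕ Y)) : Prop :=
  ∃ u v : List (X ⊕ Y), l = u ++ v ∧ isLl u ∧ isRl v ∧ u ≠ [] ∧ v ≠ []

lemma not_isL_and_isR {c : X ⊕ Y} (h1 : c.isLeft = true) (h2 : c.isRight = true) : False := by
  cases c <;> simp_all

lemma isXYl.ne_nil {l : List (X ⊕ Y)} (h : isXYl l) : l ≠ [] := by
  obtain ⟨u, v, rfl, _, _, hu, hv⟩ := h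
  simp [hu]

lemma isXYl.not_isL {l : List (X ⊕ Y)} (h : isXYl l) : ¬ isLl l := by
  obtain ⟨u, v, rfl, _, hR, _, hv⟩ := h
  intro hL
  obtain ⟨c, hc⟩ := List.exists_mem_of_ne_nil v hv
  exact not_isL_and_isR (hL c (by simp [hc])) (hR c hc)

lemma isXYl.not_isR {l : List (X ⊕ Y)} (h : isXYl l) : ¬ isRl l := by
  obtain ⟨u, v, rfl, hL, _, hu, _⟩ := h
  intro hR
  obtain ⟨c, hc⟩ := List.exists_mem_of_ne_nil u hu
  exact not_isL_and_isR (hL c hc) (hR c (by simp [hc]))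

lemma not_isL_isR_ne_nil {l : List (X ⊕ Y)} (h1 : isLl l) (h2 : isRl l) (h3 : l ≠ []) : False := by
  obtain ⟨c, hc⟩ := List.exists_mem_of_ne_nil l h3
  exact not_isL_and_isR (h1 c hc) (h2 c hc)

lemma isLl_append {u v : List (X ⊕ Y)} (hu : isLl u) (hv : isLl v) : isLl (u ++ v) := by
  intro c hc
  rcases List.mem_append.1 hc with h | h
  · exact hu c h
  · exact hv c h

lemma isRl_append {u v : List (X ⊕ Y)} (hu : isRl u) (hv : isRl v) : isRl (u ++ v) := by
  intro c hc
  rcases List.mem_append.1 hc with h | h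
  · exact hu c h
  · exact hv c h

lemma isLl_of_append_left {u v : List (X ⊕ Y)} (h : isLl (u ++ v)) : isLl u :=
  fun c hc => h c (List.mem_append.2 (Or.inl hc))

lemma isLl_of_append_right {u v : List (X ⊕ Y)} (h : isLl (u ++ v)) : isLl v :=
  fun c hc => h c (List.mem_append.2 (Or.inr hc))

lemma isRl_of_append_left {u v : List (X ⊕ Y)} (h : isRl (u ++ v)) : isRl u :=
  fun c hc => h c (List.mem_append.2 (Or.inl hc))

lemma isRl_of_append_right {u v : List (X ⊕ Y)} (h : isRl (u ++ v)) : isRl v :=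
  fun c hc => h c (List.mem_append.2 (Or.inr hc))

/-- Classification of when a concatenation is an XY-word. -/
lemma isXYl_append_iff (w v : List (X ⊕ Y)) :
    isXYl (w ++ v) ↔
      ((w ≠ [] ∧ isLl w) ∧ (v ≠ [] ∧ isRl v)) ∨
      (isXYl w ∧ (v ≠ [] ∧ isRl v)) ∨
      ((w ≠ [] ∧ isLl w) ∧ isXYl v) ∨
      (isXYl w ∧ v = []) ∨
      (w = [] ∧ isXYl v) := by
  constructor
  · rintro ⟨u, u', h, hL, hR, hu, hu'⟩
    rcases List.append_eq_append_iff.1 h with ⟨a, ha1, ha2⟩ | ⟨c, hc1, hc2⟩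
    · -- u = w ++ a, v = a ++ u'
      subst ha1; subst ha2
      have hwL : isLl w := isLl_of_append_left hL
      have haL : isLl a := isLl_of_append_right hL
      by_cases hw : w = []
      · subst hw
        refine Or.inr (Or.inr (Or.inr (Or.inr ⟨rfl, a, u', by simp, haL, hR, ?_, hu'⟩)))
        simpa using hu
      · by_cases ha : a = []
        · subst ha
          exact Or.inl ⟨⟨hw, hwL⟩, ⟨by simpa using hu', by simpa using hR⟩⟩
        · exact Or.inr (Or.inr (Or.inl ⟨⟨hw, hwL⟩, a, u', by simp, haL, hR, ha, hu'⟩))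
    · -- w = u ++ c, u' = c ++ v
      subst hc1; subst hc2
      have hcR : isRl c := isRl_of_append_left hR
      have hvR : isRl v := isRl_of_append_right hR
      by_cases hv : v = []
      · subst hv
        refine Or.inr (Or.inr (Or.inr (Or.inl ⟨⟨u, c, by simp, hL, hcR, hu, ?_⟩, rfl⟩)))
        simpa using hu'
      · by_cases hc : c = []
        · subst hc
          exact Or.inl ⟨⟨by simpa using hu, by simpa using hL⟩, ⟨hv, hvR⟩⟩
        · exact Or.inr (Or.inl ⟨⟨u, c, by simp, hL, hcR, hu, hc⟩, ⟨hv, hvR⟩⟩)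
  · rintro (⟨⟨hw, hwL⟩, hv, hvR⟩ | ⟨⟨u, u', rfl, hL, hR, hu, hu'⟩, hv, hvR⟩ |
      ⟨⟨hw, hwL⟩, u, u', rfl, hL, hR, hu, hu'⟩ | ⟨hw, rfl⟩ | ⟨rfl, hv⟩)
    · exact ⟨w, v, rfl, hwL, hvR, hw, hv⟩
    · exact ⟨u, u' ++ v, by simp, hL, isRl_append hR hvR, hu, by simp [hu']⟩
    · exact ⟨w ++ u, u', by simp, isLl_append hwL hL, hR, by simp [hw], hu'⟩
    · simpa [isXYl] using hw
    · simpa [isXYl] using hv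

end ListAux

section WordAux

variable {X Y : Type*}

lemma isXYWord_iff (w : FreeMonoid (X ⊕ Y)) : isXYWord w ↔ isXYl (FreeMonoid.toList w) := by
  simp only [isXYWord, isXYl, isLl, isRl]

lemma toList_eq_nil_iff (w : FreeMonoid (X ⊕ Y)) : w = 1 ↔ FreeMonoid.toList w = [] :=
  FreeMonoid.toList.apply_eq_iff_eq.symm.trans (by rw [show ([] : List (X ⊕ Y)) = FreeMonoid.toList 1 from rfl])

end WordAux

section SingleAux

variable {F X Y : Type*} [Field F]

local notation "M" => MonoidAlgebra F (FreeMonoid (X ⊕ Y))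

lemma part1_single (w : FreeMonoid (X ⊕ Y)) (a : F) :
    part1 (MonoidAlgebra.single w a : M) = if w = 1 then MonoidAlgebra.single w a else 0 := by
  unfold part1
  split_ifs with h
  · exact congrArg MonoidAlgebra.ofCoeff (Finsupp.filter_single_of_pos _ h)
  · exact congrArg MonoidAlgebra.ofCoeff (Finsupp.filter_single_of_neg _ h)

lemma partX_single (w : FreeMonoid (X ⊕ Y)) (a : F) :
    partX (MonoidAlgebra.single w a : M) =
      if w ≠ 1 ∧ isLl (FreeMonoid.toList w) then MonoidAlgebra.single w a else 0 := by
  unfold partX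
  split_ifs with h
  · exact congrArg MonoidAlgebra.ofCoeff (@Finsupp.filter_single_of_pos _ _ _ _ (Classical.decPred _) _ _ h)
  · exact congrArg MonoidAlgebra.ofCoeff (@Finsupp.filter_single_of_neg _ _ _ _ (Classical.decPred _) _ _ h)

lemma partY_single (w : FreeMonoid (X ⊕ Y)) (a : F) :
    partY (MonoidAlgebra.single w a : M) =
      if w ≠ 1 ∧ isRl (FreeMonoid.toList w) then MonoidAlgebra.single w a else 0 := by
  unfold partY
  split_ifs with h
  · exact congrArg MonoidAlgebra.ofCoeff (@Finsupp.filter_single_of_pos _ _ _ _ (Classical.decPred _) _ _ h)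
  · exact congrArg MonoidAlgebra.ofCoeff (@Finsupp.filter_single_of_neg _ _ _ _ (Classical.decPred _) _ _ h)

lemma partXY_single (w : FreeMonoid (X ⊕ Y)) (a : F) :
    partXY (MonoidAlgebra.single w a : M) =
      if isXYl (FreeMonoid.toList w) then MonoidAlgebra.single w a else 0 := by
  unfold partXY
  split_ifs with h
  · exact congrArg MonoidAlgebra.ofCoeff (Finsupp.filter_single_of_pos _ ((isXYWord_iff w).2 h))
  · exact congrArg MonoidAlgebra.ofCoeff (Finsupp.filter_single_of_neg _ (fun hc => h ((isXYWord_iff w).1 hc)))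

lemma ite_single_mul_ite_single (p q : Prop) [Decidable p] [Decidable q]
    (w v : FreeMonoid (X ⊕ Y)) (a b : F) :
    (if p then (MonoidAlgebra.single w a : M) else 0) *
        (if q then (MonoidAlgebra.single v b : M) else 0) =
      if p ∧ q then (MonoidAlgebra.single (w * v) (a * b) : M) else 0 := by
  by_cases hp : p <;> by_cases hq : q <;>
    simp [hp, hq, MonoidAlgebra.single_mul_single]

lemma partXY_single_mul_single (w v : FreeMonoid (X ⊕ Y)) (a b : F) :
    partXY ((MonoidAlgebra.single w a : M) * MonoidAlgebra.single v b) =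
      partX (MonoidAlgebra.single w a : M) * partY (MonoidAlgebra.single v b : M) +
        partXY (MonoidAlgebra.single w a : M) * partY (MonoidAlgebra.single v b : M) +
        partX (MonoidAlgebra.single w a : M) * partXY (MonoidAlgebra.single v b : M) +
        partXY (MonoidAlgebra.single w a : M) * part1 (MonoidAlgebra.single v b : M) +
        part1 (MonoidAlgebra.single w a : M) * partXY (MonoidAlgebra.single v b : M) := by
  rw [MonoidAlgebra.single_mul_single, partXY_single, partX_single, partY_single, partXY_single,
    partXY_single, part1_single, part1_single, ite_single_mul_ite_single,
    ite_single_mul_ite_single, ite_single_mul_ite_single, ite_single_mul_ite_single,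
    ite_single_mul_ite_single]
  have hWV : FreeMonoid.toList (w * v) = FreeMonoid.toList w ++ FreeMonoid.toList v := rfl
  set W := FreeMonoid.toList w with hW
  set V := FreeMonoid.toList v with hV
  have hw1 : (w ≠ 1) ↔ W ≠ [] := not_congr (toList_eq_nil_iff w)
  have hv1 : (v ≠ 1) ↔ V ≠ [] := not_congr (toList_eq_nil_iff v)
  have hw1' : (w = 1) ↔ W = [] := toList_eq_nil_iff w
  have hv1' : (v = 1) ↔ V = [] := toList_eq_nil_iff v
  by_cases hXY : isXYl (W ++ V)
  · rw [hWV, if_pos hXY]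
    rcases (isXYl_append_iff W V).1 hXY with h1 | h2 | h3 | h4 | h5
    · have n2 : ¬(isXYl W ∧ (v ≠ 1 ∧ isRl V)) := fun h => h.1.not_isL h1.1.2
      have n3 : ¬((w ≠ 1 ∧ isLl W) ∧ isXYl V) := fun h => h.2.not_isR h1.2.2
      have n4 : ¬(isXYl W ∧ v = 1) := fun h => h.1.not_isL h1.1.2
      have n5 : ¬(w = 1 ∧ isXYl V) := fun h => h1.1.1 (hw1'.1 h.1)
      rw [if_pos ⟨⟨hw1.2 h1.1.1, h1.1.2⟩, ⟨hv1.2 h1.2.1, h1.2.2⟩⟩, if_neg n2, if_neg n3,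
        if_neg n4, if_neg n5]
      simp
    · have n1 : ¬((w ≠ 1 ∧ isLl W) ∧ (v ≠ 1 ∧ isRl V)) := fun h => h2.1.not_isL h.1.2
      have n3 : ¬((w ≠ 1 ∧ isLl W) ∧ isXYl V) := fun h => h2.1.not_isL h.1.2
      have n4 : ¬(isXYl W ∧ v = 1) := fun h => h2.2.1 (hv1'.1 h.2)
      have n5 : ¬(w = 1 ∧ isXYl V) := fun h => h2.1.ne_nil (hw1'.1 h.1)
      rw [if_neg n1, if_pos ⟨h2.1, ⟨hv1.2 h2.2.1, h2.2.2⟩⟩, if_neg n3, if_neg n4, if_neg n5]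
      simp
    · have n1 : ¬((w ≠ 1 ∧ isLl W) ∧ (v ≠ 1 ∧ isRl V)) := fun h => h3.2.not_isR h.2.2
      have n2 : ¬(isXYl W ∧ (v ≠ 1 ∧ isRl V)) := fun h => h3.2.not_isR h.2.2
      have n4 : ¬(isXYl W ∧ v = 1) := fun h => h3.2.ne_nil (hv1'.1 h.2)
      have n5 : ¬(w = 1 ∧ isXYl V) := fun h => h3.1.1 (hw1'.1 h.1)
      rw [if_neg n1, if_neg n2, if_pos ⟨⟨hw1.2 h3.1.1, h3.1.2⟩, h3.2⟩, if_neg n4, if_neg n5]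
      simp
    · have hVnil : V = [] := h4.2
      have n1 : ¬((w ≠ 1 ∧ isLl W) ∧ (v ≠ 1 ∧ isRl V)) := fun h => h.2.1 (hv1'.2 hVnil)
      have n2 : ¬(isXYl W ∧ (v ≠ 1 ∧ isRl V)) := fun h => h.2.1 (hv1'.2 hVnil)
      have n3 : ¬((w ≠ 1 ∧ isLl W) ∧ isXYl V) := fun h => h.2.ne_nil hVnil
      have n5 : ¬(w = 1 ∧ isXYl V) := fun h => h4.1.ne_nil (hw1'.1 h.1)
      rw [if_neg n1, if_neg n2, if_neg n3, if_pos ⟨h4.1, hv1'.2 hVnil⟩, if_neg n5]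
      simp
    · have hWnil : W = [] := h5.1
      have n1 : ¬((w ≠ 1 ∧ isLl W) ∧ (v ≠ 1 ∧ isRl V)) := fun h => h.1.1 (hw1'.2 hWnil)
      have n2 : ¬(isXYl W ∧ (v ≠ 1 ∧ isRl V)) := fun h => h.1.ne_nil hWnil
      have n3 : ¬((w ≠ 1 ∧ isLl W) ∧ isXYl V) := fun h => h.1.1 (hw1'.2 hWnil)
      have n4 : ¬(isXYl W ∧ v = 1) := fun h => h.1.ne_nil hWnil
      rw [if_neg n1, if_neg n2, if_neg n3, if_neg n4, if_pos ⟨hw1'.2 hWnil, h5.2⟩]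
      simp
  · rw [hWV, if_neg hXY]
    have n1 : ¬((w ≠ 1 ∧ isLl W) ∧ (v ≠ 1 ∧ isRl V)) := fun h =>
      hXY ((isXYl_append_iff W V).2 (Or.inl ⟨⟨hw1.1 h.1.1, h.1.2⟩, ⟨hv1.1 h.2.1, h.2.2⟩⟩))
    have n2 : ¬(isXYl W ∧ (v ≠ 1 ∧ isRl V)) := fun h =>
      hXY ((isXYl_append_iff W V).2 (Or.inr (Or.inl ⟨h.1, ⟨hv1.1 h.2.1, h.2.2⟩⟩)))
    have n3 : ¬((w ≠ 1 ∧ isLl W) ∧ isXYl V) := fun h =>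
      hXY ((isXYl_append_iff W V).2 (Or.inr (Or.inr (Or.inl ⟨⟨hw1.1 h.1.1, h.1.2⟩, h.2⟩))))
    have n4 : ¬(isXYl W ∧ v = 1) := fun h =>
      hXY ((isXYl_append_iff W V).2 (Or.inr (Or.inr (Or.inr (Or.inl ⟨h.1, hv1'.1 h.2⟩)))))
    have n5 : ¬(w = 1 ∧ isXYl V) := fun h =>
      hXY ((isXYl_append_iff W V).2 (Or.inr (Or.inr (Or.inr (Or.inr ⟨hw1'.1 h.1, h.2⟩)))))
    rw [if_neg n1, if_neg n2, if_neg n3, if_neg n4, if_neg n5]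
    simp

lemma part1_zero : part1 (0 : M) = 0 := congrArg MonoidAlgebra.ofCoeff (Finsupp.filter_zero _)
lemma partX_zero : partX (0 : M) = 0 := congrArg MonoidAlgebra.ofCoeff (@Finsupp.filter_zero _ _ _ _ (Classical.decPred _))
lemma partY_zero : partY (0 : M) = 0 := congrArg MonoidAlgebra.ofCoeff (@Finsupp.filter_zero _ _ _ _ (Classical.decPred _))
lemma partXY_zero : partXY (0 : M) = 0 := congrArg MonoidAlgebra.ofCoeff (Finsupp.filter_zero _)

lemma part1_add (f g : M) : part1 (f + g) = part1 f + part1 g := congrArg MonoidAlgebra.ofCoeff (Finsupp.filter_add (v := f.coeff) (v' := g.coeff))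
lemma partX_add (f g : M) : partX (f + g) = partX f + partX g := congrArg MonoidAlgebra.ofCoeff (@Finsupp.filter_add _ _ _ _ (Classical.decPred _) f.coeff g.coeff)
lemma partY_add (f g : M) : partY (f + g) = partY f + partY g := congrArg MonoidAlgebra.ofCoeff (@Finsupp.filter_add _ _ _ _ (Classical.decPred _) f.coeff g.coeff)
lemma partXY_add (f g : M) : partXY (f + g) = partXY f + partXY g := congrArg MonoidAlgebra.ofCoeff (Finsupp.filter_add (v := f.coeff) (v' := g.coeff))

end SingleAux

/-- `(fg)_{XY} = f_X g_Y + f_{XY} g_Y + f_X g_{XY} + f_{XY} g_1 + f_1 g_{XY}`. -/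
theorem partXY_mul (f g : MonoidAlgebra F (FreeMonoid (X ⊕ Y))) :
    partXY (f * g) =
      partX f * partY g + partXY f * partY g + partX f * partXY g +
        partXY f * part1 g + part1 f * partXY g := by
  induction f using MonoidAlgebra.induction_linear with
  | zero => simp [partXY_zero, partX_zero, part1_zero]
  | add f₁ f₂ h1 h2 =>
      rw [add_mul, partXY_add, h1, h2, partX_add, partXY_add, part1_add,
        add_mul, add_mul, add_mul, add_mul, add_mul]
      abel
  | single w a =>
      induction g using MonoidAlgebra.induction_linear with
      | zero => simp [partXY_zero, partY_zero, part1_zero]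
      | add g₁ g₂ h1 h2 =>
          rw [mul_add, partXY_add, h1, h2, partY_add, partXY_add, part1_add,
            mul_add, mul_add, mul_add, mul_add, mul_add]
          abel
      | single v b => exact partXY_single_mul_single w v a b

end
end
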